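/- At the true nuisance functions the AIPW mediation functional is exactly unbiased: E[ 1{A = a} / π_A(a | W) · r(M, W) · (Ŷ − b(M, W)) + 1{A = a'} / π_A(a' | W) · (b(M, W) − ξ(W)) + ξ(W) ] = ψ, where ψ = Σ_{w ∈ 𝕎} P(W = w) · Σ_{m ∈ 𝕄} E[Ŷ | A = a, M = m, W = w] · P(M = m | A = a', W = w). (Population unbiasedness of the AIPW estimator with true nuisances, underlying Theorem 2.) -/

import Mathlib

open MeasureTheory ProbabilityTheory
open scoped ENNReal BigOperators

/-!
Both correction terms of the AIPW functional have the form `c(X) · (Z - E[Z | X])` for a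
finite-valued `X`: the first with `X = (A, M, W)`, `Z = Ŷ`, and the second with `X = (A, W)`,
`Z = b(M, W)`, since `ξ(w)` is the conditional mean of `b(M, w)` given `A = a', W = w`.
Such terms have mean zero whatever the weights `c` are, so the expectation reduces to
`E[ξ(W)] = ψ`.
-/

namespace MeasureTheory.Integrable

variable {Ω : Type*} [MeasurableSpace Ω] {μ : Measure Ω} {f : Ω → ℝ}

theorem cond (hf : Integrable f μ) (s : Set Ω) : Integrable f μ[|s] := by
  rcases eq_or_ne (μ s) 0 with hs | hs
  · simp [cond_eq_zero_of_meas_eq_zero hs]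
  · exact hf.restrict.smul_measure (ENNReal.inv_ne_top.2 hs)

end MeasureTheory.Integrable

namespace ProbabilityTheory

variable {Ω ι : Type*} [MeasurableSpace Ω] {μ : Measure Ω}
  [Fintype ι] [MeasurableSpace ι] [DiscreteMeasurableSpace ι] {X : Ω → ι}

theorem integrable_comp_mul (hX : Measurable X) (c : ι → ℝ) {f : Ω → ℝ}
    (hf : Integrable f μ) : Integrable (fun ω => c (X ω) * f ω) μ :=
  hf.bdd_mul (c := ∑ x, ‖c x‖) (Measurable.of_discrete.comp hX).aestronglyMeasurable
    (.of_forall fun ω => Finset.single_le_sum (f := fun x => ‖c x‖)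
      (fun _ _ => norm_nonneg _) (Finset.mem_univ (X ω)))

theorem integrable_comp_of_fintype [IsFiniteMeasure μ] (hX : Measurable X) (g : ι → ℝ) :
    Integrable (fun ω => g (X ω)) μ :=
  (integrable_map_measure (Integrable.of_finite).aestronglyMeasurable hX.aemeasurable).1
    Integrable.of_finite

theorem integral_comp_eq_sum [IsFiniteMeasure μ] (hX : Measurable X) (g : ι → ℝ) :
    ∫ ω, g (X ω) ∂μ = ∑ x, μ.real (X ⁻¹' {x}) * g x := by
  rw [← integral_map hX.aemeasurable (Integrable.of_finite).aestronglyMeasurable,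
    integral_fintype Integrable.of_finite]
  simp [map_measureReal_apply hX (.singleton _)]

theorem integral_eq_sum_measureReal_mul_integral_cond [IsFiniteMeasure μ] (hX : Measurable X)
    {f : Ω → ℝ} (hf : Integrable f μ) :
    ∫ ω, f ω ∂μ = ∑ x, μ.real (X ⁻¹' {x}) * ∫ ω, f ω ∂μ[|X ⁻¹' {x}] := by
  conv_lhs => rw [← sum_meas_smul_cond_fiber hX μ]
  rw [integral_finsetSum_measure fun x _ => (hf.cond _).smul_measure (measure_ne_top _ _)]
  simp [integral_smul_measure, measureReal_def]

theorem integral_mul_sub_condMean_eq_zero [IsFiniteMeasure μ] (hX : Measurable X) {Z : Ω → ℝ}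
    (hZ : Integrable Z μ) (c e : ι → ℝ)
    (he : ∀ x, c x ≠ 0 → e x = ∫ ω, Z ω ∂μ[|X ⁻¹' {x}]) :
    ∫ ω, c (X ω) * (Z ω - e (X ω)) ∂μ = 0 := by
  have h_int : Integrable (fun ω => c (X ω) * (Z ω - e (X ω))) μ :=
    integrable_comp_mul hX c (hZ.sub (integrable_comp_of_fintype hX e))
  rw [integral_eq_sum_measureReal_mul_integral_cond hX h_int]
  refine Finset.sum_eq_zero fun x _ => ?_
  rcases eq_or_ne (μ (X ⁻¹' {x})) 0 with hx | hx
  · simp [measureReal_def, hx]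
  have := cond_isProbabilityMeasure hx
  have h_fiber : ∫ ω, c (X ω) * (Z ω - e (X ω)) ∂μ[|X ⁻¹' {x}]
      = c x * (∫ ω, Z ω ∂μ[|X ⁻¹' {x}] - e x) :=
    calc _ = ∫ ω, c x * (Z ω - e x) ∂μ[|X ⁻¹' {x}] :=
          integral_congr_ae <| (ae_cond_mem (hX (.singleton x))).mono fun ω hω => by
            simp only [Set.mem_preimage, Set.mem_singleton_iff] at hω
            simp only [hω]
      _ = _ := by
          rw [integral_const_mul, integral_sub (hZ.cond _) (integrable_const _), integral_const]
          simp
  by_cases hc : c x = 0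
  · simp [h_fiber, hc]
  · simp [h_fiber, ← he x hc]

theorem integral_cond_comp_eq_sum (hX : Measurable X) {s : Set Ω} (hs : MeasurableSet s)
    {κ : Type*} {V : Ω → κ} {v : κ} (hV : ∀ ω ∈ s, V ω = v) (g : ι → κ → ℝ) :
    ∫ ω, g (X ω) (V ω) ∂μ[|s] = ∑ x, (μ[|s]).real (X ⁻¹' {x}) * g x v := by
  rw [← integral_comp_eq_sum hX]
  exact integral_congr_ae <| (ae_cond_mem hs).mono fun ω hω => by simp only [hV ω hω]

end ProbabilityTheory

section Mediation

variable {Ω 𝕄 𝕎 : Type*} [MeasurableSpace Ω] {P : Measure Ω} [IsFiniteMeasure P]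
  [Fintype 𝕄] [MeasurableSpace 𝕄] [MeasurableSingletonClass 𝕄]
  [Fintype 𝕎] [MeasurableSpace 𝕎] [MeasurableSingletonClass 𝕎]
  {A : Ω → Bool} {M : Ω → 𝕄} {W : Ω → 𝕎}

theorem integral_outcome_correction_eq_zero (hA : Measurable A) (hM : Measurable M)
    (hW : Measurable W) {a : Bool} {Y : Ω → ℝ} (hY : Integrable Y P) {b : 𝕄 → 𝕎 → ℝ}
    (hb : ∀ m w, b m w = ∫ ω, Y ω ∂(P[|{ω | A ω = a ∧ M ω = m ∧ W ω = w}]))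
    (c : Bool × 𝕄 × 𝕎 → ℝ) (hc : ∀ x, c x ≠ 0 → x.1 = a) :
    ∫ ω, c (A ω, M ω, W ω) * (Y ω - b (M ω) (W ω)) ∂P = 0 := by
  refine integral_mul_sub_condMean_eq_zero (hA.prodMk (hM.prodMk hW)) hY c
    (fun x => b x.2.1 x.2.2) fun ⟨α, m, w⟩ hcx => ?_
  obtain rfl : α = a := hc _ hcx
  rw [hb]
  congr 2
  ext ω
  simp [Prod.ext_iff]

theorem integral_mediator_correction_eq_zero (hA : Measurable A) (hM : Measurable M)
    (hW : Measurable W) {a' : Bool} {b : 𝕄 → 𝕎 → ℝ} {ξ : 𝕎 → ℝ}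
    (hξ : ∀ w, ξ w = ∑ m, b m w * ((P[|{ω | A ω = a' ∧ W ω = w}]) {ω | M ω = m}).toReal)
    (c : Bool × 𝕎 → ℝ) (hc : ∀ x, c x ≠ 0 → x.1 = a') :
    ∫ ω, c (A ω, W ω) * (b (M ω) (W ω) - ξ (W ω)) ∂P = 0 := by
  refine integral_mul_sub_condMean_eq_zero (Z := fun ω => b (M ω) (W ω)) (hA.prodMk hW)
    (integrable_comp_of_fintype (hM.prodMk hW) (Function.uncurry b)) c (fun x => ξ x.2)
    fun ⟨α, w⟩ hcx => ?_
  obtain rfl : α = a' := hc _ hcx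
  have hS : (fun ω => (A ω, W ω)) ⁻¹' {(α, w)} = {ω | A ω = α ∧ W ω = w} := by
    ext ω
    simp [Prod.ext_iff]
  have hS_meas : MeasurableSet {ω | A ω = α ∧ W ω = w} :=
    (hA (.singleton α)).inter (hW (.singleton w))
  rw [hS, integral_cond_comp_eq_sum hM hS_meas (fun ω hω => hω.2) b, hξ]
  exact Finset.sum_congr rfl fun m _ => mul_comm _ _

end Mediation

theorem aipw_unbiased_at_truth
    {Ω : Type*} [MeasurableSpace Ω] (P : Measure Ω) [IsProbabilityMeasure P]
    {𝕄 𝕎 : Type*} [Fintype 𝕄] [MeasurableSpace 𝕄] [MeasurableSingletonClass 𝕄]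
    [Fintype 𝕎] [MeasurableSpace 𝕎] [MeasurableSingletonClass 𝕎]
    (A : Ω → Bool) (M : Ω → 𝕄) (W : Ω → 𝕎)
    (hA : Measurable A) (hM : Measurable M) (hW : Measurable W)
    (a a' : Bool)
    (Y : Ω → ℝ) (hY_meas : Measurable Y) (hY_bdd : ∃ C : ℝ, ∀ ω, |Y ω| ≤ C)
    -- true nuisance functions
    (πA : Bool → 𝕎 → ℝ)
    (b : 𝕄 → 𝕎 → ℝ)
    (hb : ∀ (m : 𝕄) (w : 𝕎),
      b m w = ∫ ω, Y ω ∂(P[|{ω | A ω = a ∧ M ω = m ∧ W ω = w}]))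
    (ξ : 𝕎 → ℝ)
    (hξ : ∀ w : 𝕎,
      ξ w = ∑ m : 𝕄, b m w * ((P[|{ω | A ω = a' ∧ W ω = w}]) {ω | M ω = m}).toReal)
    (r : 𝕄 → 𝕎 → ℝ)
    (ψ : ℝ) (hψ : ψ = ∑ w : 𝕎, (P {ω | W ω = w}).toReal * ξ w) :
    ∫ ω,
        ((if A ω = a then (1 : ℝ) else 0) / πA a (W ω)) * r (M ω) (W ω)
            * (Y ω - b (M ω) (W ω))
          + ((if A ω = a' then (1 : ℝ) else 0) / πA a' (W ω))
            * (b (M ω) (W ω) - ξ (W ω))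
          + ξ (W ω) ∂P
      = ψ := by
  set cOut : Bool × 𝕄 × 𝕎 → ℝ :=
    fun x => (if x.1 = a then 1 else 0) / πA a x.2.2 * r x.2.1 x.2.2
  set cMed : Bool × 𝕎 → ℝ := fun x => (if x.1 = a' then 1 else 0) / πA a' x.2
  show ∫ ω, cOut (A ω, M ω, W ω) * (Y ω - b (M ω) (W ω))
    + cMed (A ω, W ω) * (b (M ω) (W ω) - ξ (W ω)) + ξ (W ω) ∂P = ψ
  obtain ⟨C, hC⟩ := hY_bdd
  have hY : Integrable Y P :=
    .of_bound hY_meas.aestronglyMeasurable C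
      (.of_forall fun ω => (Real.norm_eq_abs _).trans_le (hC ω))
  have hbMW : Integrable (fun ω => b (M ω) (W ω)) P :=
    integrable_comp_of_fintype (hM.prodMk hW) (Function.uncurry b)
  have h_int_outcome : Integrable (fun ω => cOut (A ω, M ω, W ω) * (Y ω - b (M ω) (W ω))) P :=
    integrable_comp_mul (hA.prodMk (hM.prodMk hW)) cOut (hY.sub hbMW)
  have h_int_mediator : Integrable (fun ω => cMed (A ω, W ω) * (b (M ω) (W ω) - ξ (W ω))) P :=
    integrable_comp_mul (hA.prodMk hW) cMed (hbMW.sub (integrable_comp_of_fintype hW ξ))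
  have hcOut : ∀ x, cOut x ≠ 0 → x.1 = a := fun x hx => by
    by_contra h; simp [cOut, h] at hx
  have hcMed : ∀ x, cMed x ≠ 0 → x.1 = a' := fun x hx => by
    by_contra h; simp [cMed, h] at hx
  rw [integral_add ?_ (integrable_comp_of_fintype hW ξ),
    integral_add h_int_outcome h_int_mediator,
    integral_outcome_correction_eq_zero hA hM hW hY hb cOut hcOut,
    integral_mediator_correction_eq_zero hA hM hW hξ cMed hcMed,
    integral_comp_eq_sum hW, hψ, zero_add, zero_add]
  · rfl
  · exact h_int_outcome.add h_int_mediator
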